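/- The map sending a pair (properly pointed synchronized interval I1, synchronized interval I2) to the synchronized interval [u·P1ℓ·d·P1r·P2, u·Q1·d·Q2] is a bijection onto the set of nonempty synchronized intervals. -/

import Mathlib

/-- A Dyck word: `true` is an up step `u`, `false` is a down step `d`. -/
def IsDyck (w : List Bool) : Prop :=
  w.count true = w.count false ∧ ∀ k, (w.take k).count false ≤ (w.take k).count true

/-- Position (0-based index) of the `i`-th (1-based) up step of `w`. -/
noncomputable def upPos (w : List Bool) (i : ℕ) : ℕ :=
  sInf {j | w.getD j false = true ∧ (w.take (j + 1)).count true = i}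

/-- Position of the down step matching the up step at position `k`:
the first later down step such that the letters strictly in between form a Dyck word. -/
noncomputable def matchIdx (w : List Bool) (k : ℕ) : ℕ :=
  sInf {m | k < m ∧ w.getD m true = false ∧ IsDyck ((w.drop (k + 1)).take (m - (k + 1)))}

/-- The distance function `D_w(i)`: number of letters between the `i`-th up step and its
matching down step, plus one. -/
noncomputable def distFn (w : List Bool) (i : ℕ) : ℕ :=
  matchIdx w (upPos w i) - upPos w i

/-- One rotation step of the Tamari order on Dyck words: a factor `d · B` (with `B` a
nonempty Dyck word) is replaced by `B · d`. -/
def TamariStep (P Q : List Bool) : Prop :=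
  ∃ A B C : List Bool, IsDyck B ∧ B ≠ [] ∧
    P = A ++ false :: (B ++ C) ∧ Q = A ++ (B ++ false :: C)

/-- The Tamari order on Dyck words: reflexive-transitive closure of rotation steps. -/
def TamariLe : List Bool → List Bool → Prop := Relation.ReflTransGen TamariStep
/-- The type of a Dyck word `w` of size `n`: the word of length `n - 1` over `{N, E}`
(encoded with `true = E`, `false = N`) whose `k`-th letter is `E` iff the letter following
the `k`-th up step of `w` is an up step. -/
noncomputable def typeWord (w : List Bool) : List Bool :=
  (List.range (w.count true - 1)).map (fun k => w.getD (upPos w (k + 1) + 1) false)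

/-- A synchronized interval: a pair of Dyck words of the same size, comparable in the
Tamari order, and with the same type. -/
def Sync (P Q : List Bool) : Prop :=
  IsDyck P ∧ IsDyck Q ∧ P.length = Q.length ∧ TamariLe P Q ∧ typeWord P = typeWord Q

/-- Data for a pair (properly pointed synchronized interval, synchronized interval):
`x = ((P1ℓ, P1r, Q1), (P2, Q2))`. -/
def PPSI (x : (List Bool × List Bool × List Bool) × (List Bool × List Bool)) : Prop :=
  IsDyck x.1.1 ∧ IsDyck x.1.2.1 ∧ (x.1.1 = [] → x.1.2.1 = []) ∧
    Sync (x.1.1 ++ x.1.2.1) x.1.2.2 ∧ Sync x.2.1 x.2.2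

/-- Lower path of the composed interval: `u·P1ℓ·d·P1r·P2`. -/
def glueP (x : (List Bool × List Bool × List Bool) × (List Bool × List Bool)) : List Bool :=
  true :: (x.1.1 ++ false :: (x.1.2.1 ++ x.2.1))

/-- Upper path of the composed interval: `u·Q1·d·Q2`. -/
def glueQ (x : (List Bool × List Bool × List Bool) × (List Bool × List Bool)) : List Bool :=
  true :: (x.1.2.2 ++ false :: x.2.2)

/-!
Every nonempty Dyck word factors uniquely as `u A d B` with `A` and `B` Dyck words (first return
decomposition). Writing `P = u A d B` and `Q = u C d D`, the inverse map reads off `P1ℓ = A` and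
`Q1 = C`, and cuts `B` after `|C| - |A|` letters into `P1r = B₁` and `P2 = B₂`.

A rotation never increases the number of down steps in a prefix, so every balanced prefix of `Q` is
a balanced prefix of `P`; for the prefix `u C d` this shows that the cut falls on a return of `B`.
Following a chain of rotations from `P` to `Q`, each rotation either acts inside `A`, or inside
`B₁` or `B₂` (a rotation across the cut would unbalance one of the two prefixes), or moves a Dyck
factor at the front of `B` under the first arch, which leaves the words `A B₁` and `B₂` unchanged.
Hence `A B₁ ≤ C` and `B₂ ≤ D`. Types are compared through the letters following the up steps, which
split additively along the factors of a Dyck word.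
-/

open List

theorem isDyck_nil : IsDyck [] := ⟨rfl, fun k => by simp⟩

namespace IsDyck

variable {w A B T : List Bool}

theorem append (hA : IsDyck A) (hB : IsDyck B) : IsDyck (A ++ B) := by
  refine ⟨by simp [count_append, hA.1, hB.1], fun k => ?_⟩
  rw [take_append, count_append, count_append]
  have := hA.2 k
  have := hB.2 (k - A.length)
  omega

theorem nest (hA : IsDyck A) (hB : IsDyck B) : IsDyck (true :: (A ++ false :: B)) := by
  refine ⟨by simp [count_append, hA.1, hB.1]; omega, fun k => ?_⟩
  rcases k with _ | k
  · simp
  obtain hk | ⟨j, rfl⟩ : k ≤ A.length ∨ ∃ j, k = A.length + (j + 1) :=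
    (le_or_gt k A.length).imp_right fun h => ⟨k - A.length - 1, by omega⟩
  · have := hA.2 k
    simp [take_append_of_le_length hk]
    omega
  · have := hB.2 j
    simp [take_length_add_append, hA.1]
    omega

theorem take_of_count_eq (hw : IsDyck w) {k : ℕ}
    (h : (w.take k).count true = (w.take k).count false) : IsDyck (w.take k) :=
  ⟨h, fun i => by rw [take_take]; exact hw.2 _⟩

theorem drop_of_take (hw : IsDyck w) {k : ℕ} (hk : IsDyck (w.take k)) : IsDyck (w.drop k) := by
  have hcount (x : Bool) : w.count x = (w.take k).count x + (w.drop k).count x := by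
    rw [← count_append, take_append_drop]
  refine ⟨by have := hw.1; have := hk.1; rw [hcount, hcount] at *; omega, fun i => ?_⟩
  have h := hw.2 (k + i)
  rw [take_add, count_append, count_append] at h
  have := hk.1
  omega

theorem count_false_add_one_le (h : IsDyck (A ++ false :: T)) :
    A.count false + 1 ≤ A.count true := by
  simpa [take_length_add_append (i := 1)] using h.2 (A.length + 1)

theorem not_isDyck_append_false_cons (hA : IsDyck A) : ¬ IsDyck (A ++ false :: T) := fun h => by
  have := h.count_false_add_one_le
  have := hA.1
  omega

theorem of_nest (hA : IsDyck A) (h : IsDyck (true :: (A ++ false :: B))) : IsDyck B := by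
  have hpre : IsDyck ((true :: (A ++ false :: B)).take (A.length + 2)) := by
    simpa [take_length_add_append (i := 1)] using hA.nest isDyck_nil
  simpa [drop_length_add_append (i := 1)] using h.drop_of_take hpre

theorem nest_inj {A' B' : List Bool} (hA : IsDyck A) (hA' : IsDyck A')
    (h : true :: (A ++ false :: B) = true :: (A' ++ false :: B')) : A = A' ∧ B = B' := by
  rcases append_eq_append_iff.1 (cons.inj h).2 with ⟨_ | ⟨x, t⟩, rfl, h'⟩ | ⟨_ | ⟨x, t⟩, rfl, h'⟩
  · simpa using h'
  · obtain ⟨rfl, -⟩ := cons.inj h'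
    exact (hA.not_isDyck_append_false_cons hA').elim
  · simpa [eq_comm] using h'
  · obtain ⟨rfl, -⟩ := cons.inj h'
    exact (hA'.not_isDyck_append_false_cons hA).elim

theorem exists_nest (hw : IsDyck w) (hne : w ≠ []) :
    ∃ A B, IsDyck A ∧ IsDyck B ∧ w = true :: (A ++ false :: B) := by
  obtain ⟨b, M, rfl⟩ := exists_cons_of_ne_nil hne
  obtain rfl : b = true := by
    have := hw.2 1
    cases b <;> simp at this ⊢
  have hpre (i : ℕ) : (M.take i).count false ≤ (M.take i).count true + 1 := by
    simpa using hw.2 (i + 1)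
  -- the first return to the axis is the first prefix of `M` with one more `d` than `u`
  have hex : ∃ k, (M.take k).count false = (M.take k).count true + 1 :=
    ⟨M.length, by simpa using hw.1.symm⟩
  classical
  have hmin (i : ℕ) (hi : i < Nat.find hex) : (M.take i).count false ≤ (M.take i).count true := by
    have := Nat.find_min hex hi
    have := hpre i
    omega
  obtain ⟨j, hj⟩ : ∃ j, Nat.find hex = j + 1 :=
    Nat.exists_eq_add_one.2 (Nat.pos_of_ne_zero fun h => by simpa [h] using Nat.find_spec hex)
  have hk := Nat.find_spec hex
  rw [hj] at hk hmin
  have hjM : j < M.length := by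
    by_contra h
    have := hmin j (by omega)
    rw [take_of_length_le (by omega)] at hk this
    omega
  have hMj : M[j] = false := by
    have := hmin j (by omega)
    rw [take_add_one, getElem?_eq_getElem hjM] at hk
    cases h : M[j] <;> simp_all
  have hA : IsDyck (M.take j) := by
    refine ⟨?_, fun i => ?_⟩
    · rw [take_add_one, getElem?_eq_getElem hjM, hMj] at hk
      simp at hk
      omega
    · rw [take_take]
      exact hmin _ (by omega)
  have hM : M = M.take j ++ false :: M.drop (j + 1) := by
    rw [← hMj, ← drop_eq_getElem_cons hjM, take_append_drop]
  rw [hM] at hw ⊢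
  exact ⟨_, _, hA, hA.of_nest hw, rfl⟩

theorem not_isDyck_of_append_false_cons {X T S : List Bool} (h : IsDyck (X ++ false :: T)) :
    ¬ IsDyck (T ++ false :: S) := fun hT => by
  have := h.count_false_add_one_le
  have := hT.count_false_add_one_le
  have := h.1
  simp [count_append] at *
  omega

theorem two_mul_count_true (hw : IsDyck w) : 2 * w.count true = w.length := by
  have := count_true_add_count_false w
  have := hw.1
  omega

theorem getLast?_ne_some_true (hw : IsDyck w) : w.getLast? ≠ some true := fun h => by
  obtain ⟨w', rfl⟩ := getLast?_eq_some_iff.1 h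
  have := hw.1
  have := hw.2 w'.length
  simp [count_append] at *
  omega

theorem headD_eq_true (hw : IsDyck w) (hne : w ≠ []) : w.headD false = true := by
  obtain ⟨A, B, -, -, rfl⟩ := hw.exists_nest hne
  rfl

end IsDyck

namespace TamariStep

variable {P Q : List Bool}

theorem perm (h : TamariStep P Q) : P.Perm Q := by
  obtain ⟨A, B, C, -, -, rfl, rfl⟩ := h
  exact perm_middle.symm.append_left A

theorem count_false_take_le (h : TamariStep P Q) (k : ℕ) :
    (Q.take k).count false ≤ (P.take k).count false := by
  obtain ⟨A, B, C, -, -, rfl, rfl⟩ := h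
  rw [take_append (l₁ := A), take_append (l₁ := A), count_append, count_append,
    Nat.add_le_add_iff_left]
  rcases k - A.length with _ | i
  · simp
  rw [take_succ_cons, count_cons_self, take_append, take_append, count_append, count_append]
  by_cases hi : i < B.length
  · rw [show i + 1 - B.length = 0 by omega, show i - B.length = 0 by omega, take_add_one]
    simp only [take_zero, count_nil, count_append, add_zero]
    have : (B[i]?.toList).count false ≤ 1 := count_le_length.trans (by cases B[i]? <;> simp)
    omega
  · rw [take_of_length_le (by omega : B.length ≤ i + 1),
      take_of_length_le (by omega : B.length ≤ i), show i + 1 - B.length = i - B.length + 1 by omega, take_succ_cons, count_cons_self]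
    omega

theorem append_left (h : TamariStep P Q) (L : List Bool) : TamariStep (L ++ P) (L ++ Q) := by
  obtain ⟨A, B, C, hB, hBne, rfl, rfl⟩ := h
  exact ⟨L ++ A, B, C, hB, hBne, by simp, by simp⟩

theorem append_right (h : TamariStep P Q) (R : List Bool) : TamariStep (P ++ R) (Q ++ R) := by
  obtain ⟨A, B, C, hB, hBne, rfl, rfl⟩ := h
  exact ⟨A, B, C ++ R, hB, hBne, by simp, by simp⟩

end TamariStep

namespace TamariLe

variable {P Q : List Bool}

theorem perm (h : TamariLe P Q) : P.Perm Q := by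
  induction h with
  | refl => rfl
  | tail _ hstep ih => exact ih.trans hstep.perm

theorem count_false_take_le (h : TamariLe P Q) (k : ℕ) :
    (Q.take k).count false ≤ (P.take k).count false := by
  induction h with
  | refl => rfl
  | tail _ hstep ih => exact (hstep.count_false_take_le k).trans ih

theorem count_take_add_eq (h : TamariLe P Q) (k : ℕ) :
    (P.take k).count true + (P.take k).count false =
      (Q.take k).count true + (Q.take k).count false := by
  simp only [count_true_add_count_false, length_take, h.perm.length_eq]

theorem count_true_take_le (h : TamariLe P Q) (k : ℕ) :
    (P.take k).count true ≤ (Q.take k).count true := by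
  have := h.count_take_add_eq k
  have := h.count_false_take_le k
  omega

theorem isDyck (h : TamariLe P Q) (hP : IsDyck P) : IsDyck Q := by
  refine ⟨by rw [← h.perm.count_eq, ← h.perm.count_eq]; exact hP.1, fun k => ?_⟩
  calc (Q.take k).count false ≤ (P.take k).count false := h.count_false_take_le k
    _ ≤ (P.take k).count true := hP.2 k
    _ ≤ (Q.take k).count true := h.count_true_take_le k

theorem isDyck_take (h : TamariLe P Q) (hP : IsDyck P) {k : ℕ} (hQk : IsDyck (Q.take k)) :
    IsDyck (P.take k) := by
  refine hP.take_of_count_eq ?_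
  have := h.count_false_take_le k
  have := h.count_true_take_le k
  have := hP.2 k
  have := hQk.1
  omega

theorem append_left (h : TamariLe P Q) (L : List Bool) : TamariLe (L ++ P) (L ++ Q) :=
  Relation.ReflTransGen.lift (L ++ ·) (fun _ _ hstep => hstep.append_left L) _ _ h

theorem append_right (h : TamariLe P Q) (R : List Bool) : TamariLe (P ++ R) (Q ++ R) :=
  Relation.ReflTransGen.lift (· ++ R) (fun _ _ hstep => hstep.append_right R) _ _ h

end TamariLe

theorem TamariStep.isDyck {P Q : List Bool} (h : TamariStep P Q) (hP : IsDyck P) : IsDyck Q :=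
  TamariLe.isDyck (.single h) hP

namespace TamariStep

variable {A B P' : List Bool}

theorem nest_cases (hA : IsDyck A) (h : TamariStep (true :: (A ++ false :: B)) P') :
    (∃ Y Z, IsDyck Y ∧ Y ≠ [] ∧ B = Y ++ Z ∧ P' = true :: (A ++ Y ++ false :: Z)) ∨
      (∃ A', TamariStep A A' ∧ P' = true :: (A' ++ false :: B)) ∨
      (∃ B', TamariStep B B' ∧ P' = true :: (A ++ false :: B')) := by
  obtain ⟨_ | ⟨x, X⟩, Y, Z, hY, hYne, hP, rfl⟩ := h
  · simp at hP
  obtain ⟨rfl, hAB⟩ := cons.inj hP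
  rcases append_eq_append_iff.1 hAB with ⟨_ | ⟨x, T⟩, rfl, hB⟩ | ⟨_ | ⟨x, T⟩, rfl, hYZ⟩
  · exact .inl ⟨Y, Z, hY, hYne, by simpa using hB, by simp⟩
  · obtain ⟨rfl, rfl⟩ := cons.inj hB
    exact .inr <| .inr ⟨_, ⟨T, Y, Z, hY, hYne, rfl, rfl⟩, by simp⟩
  · exact .inl ⟨Y, Z, hY, hYne, by simpa using hYZ.symm, by simp⟩
  obtain ⟨rfl, hTB⟩ := cons.inj hYZ
  rcases append_eq_append_iff.1 hTB with ⟨S, rfl, rfl⟩ | ⟨_ | ⟨x, S⟩, rfl, hZ⟩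
  · exact .inr <| .inl ⟨_, ⟨X, Y, S, hY, hYne, by simp, rfl⟩, by simp⟩
  · exact .inr <| .inl ⟨_, ⟨X, T ++ [], [], hY, hYne, by simp, rfl⟩, by simpa using hZ.symm⟩
  · obtain ⟨rfl, -⟩ := cons.inj hZ
    exact (hA.not_isDyck_of_append_false_cons hY).elim

theorem take_drop {B' : List Bool} (h : TamariStep B B') (hB : IsDyck B) {m : ℕ}
    (h1 : IsDyck (B.take m)) (h2 : IsDyck (B'.take m)) :
    TamariLe (B.take m) (B'.take m) ∧ TamariLe (B.drop m) (B'.drop m) := by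
  obtain ⟨W, Y, Z, hY, hYne, rfl, rfl⟩ := h
  rcases le_or_gt m W.length with hm | hm
  · simp only [take_append_of_le_length hm, drop_append_of_le_length hm]
    exact ⟨.refl, .single ⟨W.drop m, Y, Z, hY, hYne, rfl, rfl⟩⟩
  rcases le_or_gt (W.length + 1 + Y.length) m with hm' | hm'
  · have hlen : (W ++ (Y ++ [false])).length = (W ++ false :: Y).length := by simp
    obtain ⟨n, rfl⟩ : ∃ n, m = (W ++ false :: Y).length + n :=
      ⟨m - (W ++ false :: Y).length, by simp only [length_append, length_cons]; omega⟩
    have hstep : TamariStep (W ++ false :: Y) (W ++ (Y ++ [false])) :=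
      ⟨W, Y, [], hY, hYne, by simp, rfl⟩
    rw [show W ++ false :: (Y ++ Z) = (W ++ false :: Y) ++ Z by simp,
      show W ++ (Y ++ false :: Z) = (W ++ (Y ++ [false])) ++ Z by simp, ← hlen,
      take_length_add_append, drop_length_add_append, hlen, take_length_add_append,
      drop_length_add_append]
    exact ⟨.single (hstep.append_right _), .refl⟩
  -- a cut strictly inside the rotated factor `d · Y` cannot balance both prefixes
  obtain ⟨t, rfl⟩ : ∃ t, m = W.length + (t + 1) := ⟨m - W.length - 1, by omega⟩
  rw [take_length_add_append, take_succ_cons, take_append_of_le_length (by omega)] at h1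
  rw [take_length_add_append, take_append_of_le_length (by omega)] at h2
  have := hB.count_false_add_one_le
  have := hY.2 t
  have := hY.2 (t + 1)
  have := h1.1
  have := h2.1
  simp [count_append] at *
  omega

end TamariStep

namespace TamariLe

variable {A B C D : List Bool}

theorem length_le_and_isDyck_take_of_nest (hA : IsDyck A) (hC : IsDyck C)
    (hP : IsDyck (true :: (A ++ false :: B)))
    (h : TamariLe (true :: (A ++ false :: B)) (true :: (C ++ false :: D))) :
    A.length ≤ C.length ∧ IsDyck (B.take (C.length - A.length)) := by
  have hQ : IsDyck ((true :: (C ++ false :: D)).take (C.length + 2)) := by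
    simpa [take_length_add_append (i := 1)] using hC.nest isDyck_nil
  have hPk := h.isDyck_take hP hQ
  have hAC : A.length ≤ C.length := by
    by_contra hlt
    rw [take_succ_cons, take_append_of_le_length (by omega)] at hPk
    have := hA.2 (C.length + 1)
    have := hPk.1
    rw [count_cons_self, count_cons_of_ne (by decide)] at this
    omega
  obtain ⟨m, hm⟩ := Nat.exists_eq_add_of_le hAC
  rw [hm, show A.length + m + 2 = (A.length + (m + 1)) + 1 by omega, take_succ_cons,
    take_length_add_append, take_succ_cons] at hPk
  exact ⟨hAC, by simpa [hm] using hA.of_nest hPk⟩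

theorem split_nest (hA : IsDyck A) (hC : IsDyck C) (hP : IsDyck (true :: (A ++ false :: B)))
    (h : TamariLe (true :: (A ++ false :: B)) (true :: (C ++ false :: D))) :
    TamariLe (A ++ B.take (C.length - A.length)) C ∧ TamariLe (B.drop (C.length - A.length)) D := by
  generalize hPdef : true :: (A ++ false :: B) = P at h hP
  induction h using Relation.ReflTransGen.head_induction_on generalizing A B with
  | refl =>
    obtain ⟨rfl, rfl⟩ := hA.nest_inj hC hPdef
    simpa using ⟨Relation.ReflTransGen.refl, Relation.ReflTransGen.refl⟩
  | head hstep htail ih =>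
    subst hPdef
    have hP' := hstep.isDyck hP
    rcases hstep.nest_cases hA with ⟨Y, Z, hY, -, rfl, rfl⟩ | ⟨A', hA', rfl⟩ | ⟨B', hB', rfl⟩
    · have hAY := hA.append hY
      have hle := (length_le_and_isDyck_take_of_nest hAY hC hP' htail).1
      rw [length_append] at hle
      have hcut : C.length - A.length = Y.length + (C.length - (A ++ Y).length) := by
        simp only [length_append]
        omega
      rw [hcut, take_length_add_append, drop_length_add_append, ← append_assoc]
      exact ih hAY rfl hP'
    · have ih' := ih (hA'.isDyck hA) rfl hP'
      rw [← hA'.perm.length_eq] at ih'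
      exact ⟨.head (hA'.append_right _) ih'.1, ih'.2⟩
    · have ih' := ih hA rfl hP'
      obtain ⟨-, hcut⟩ := length_le_and_isDyck_take_of_nest hA hC hP (.head hstep htail)
      obtain ⟨-, hcut'⟩ := length_le_and_isDyck_take_of_nest hA hC hP' htail
      obtain ⟨htake, hdrop⟩ := hB'.take_drop (hA.of_nest hP) hcut hcut'
      exact ⟨(htake.append_left A).trans ih'.1, hdrop.trans ih'.2⟩

end TamariLe

section upPos

variable {w : List Bool} {i j : ℕ}

theorem take_add_one_of_getD (h : w.getD j false = true) : w.take (j + 1) = w.take j ++ [true] := by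
  rw [take_add_one]
  cases hj : w[j]? <;> simp_all [getD_eq_getElem?_getD]

theorem upPos_eq (hj : w.getD j false = true) (hi : (w.take (j + 1)).count true = i) :
    upPos w i = j := by
  obtain ⟨hj', hi'⟩ : w.getD (upPos w i) false = true ∧ (w.take (upPos w i + 1)).count true = i :=
    Nat.sInf_mem (s := {j | w.getD j false = true ∧ (w.take (j + 1)).count true = i}) ⟨j, hj, hi⟩
  have lt_of_lt {a b : ℕ} (hb : w.getD b false = true) (hab : a < b) :
      (w.take (a + 1)).count true < (w.take (b + 1)).count true := by
    rw [take_add_one_of_getD hb, count_append]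
    have := (take_sublist_take_left (l := w) (show a + 1 ≤ b from hab)).count_le true
    simp only [count_singleton_self]
    omega
  rcases lt_trichotomy (upPos w i) j with h | h | h
  · exact absurd (lt_of_lt hj h) (by omega)
  · exact h
  · exact absurd (lt_of_lt hj' h) (by omega)

theorem exists_getD_eq_true_count_take (h1 : 1 ≤ i) (h2 : i ≤ w.count true) :
    ∃ j, w.getD j false = true ∧ (w.take (j + 1)).count true = i := by
  induction w generalizing i with
  | nil => simp at h2; omega
  | cons b w ih =>
    cases b
    · obtain ⟨j, hj⟩ := ih h1 (by simpa using h2)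
      exact ⟨j + 1, by simpa using hj⟩
    · rcases Nat.eq_or_lt_of_le h1 with rfl | h1
      · exact ⟨0, by simp⟩
      · obtain ⟨j, hj, hi⟩ := ih (i := i - 1) (by omega) (by simp at h2; omega)
        exact ⟨j + 1, by simpa using hj, by simp [hi]; omega⟩

theorem upPos_spec (h1 : 1 ≤ i) (h2 : i ≤ w.count true) :
    w.getD (upPos w i) false = true ∧ (w.take (upPos w i + 1)).count true = i := by
  obtain ⟨j, hj, hi⟩ := exists_getD_eq_true_count_take h1 h2
  rw [upPos_eq hj hi]
  exact ⟨hj, hi⟩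

theorem upPos_cons_false (h1 : 1 ≤ i) (h2 : i ≤ w.count true) :
    upPos (false :: w) i = upPos w i + 1 :=
  upPos_eq (by simpa using (upPos_spec h1 h2).1) (by simpa using (upPos_spec h1 h2).2)

theorem upPos_cons_true_add_one (h1 : 1 ≤ i) (h2 : i ≤ w.count true) :
    upPos (true :: w) (i + 1) = upPos w i + 1 :=
  upPos_eq (by simpa using (upPos_spec h1 h2).1) (by simpa using (upPos_spec h1 h2).2)

theorem upPos_cons_true_one : upPos (true :: w) 1 = 0 :=
  upPos_eq (by simp) (by simp)

end upPos

def upFollowers : List Bool → List Bool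
  | [] => []
  | false :: w => upFollowers w
  | true :: w => w.headD false :: upFollowers w

@[simp] theorem upFollowers_nil : upFollowers [] = [] := rfl

@[simp] theorem upFollowers_cons_false (w : List Bool) : upFollowers (false :: w) = upFollowers w :=
  rfl

@[simp] theorem upFollowers_cons_true (w : List Bool) :
    upFollowers (true :: w) = w.headD false :: upFollowers w := rfl

@[simp] theorem length_upFollowers (w : List Bool) : (upFollowers w).length = w.count true := by
  induction w with
  | nil => rfl
  | cons b w ih => cases b <;> simp [ih]

theorem getLast_upFollowers (w : List Bool) (h : upFollowers w ≠ []) :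
    (upFollowers w).getLast h = false := by
  induction w with
  | nil => simp at h
  | cons b w ih =>
    rcases b with _ | _
    · exact ih h
    by_cases hw : upFollowers w = []
    · simp only [upFollowers_cons_true, hw, getLast_singleton]
      rcases w with _ | ⟨_ | _, w⟩ <;> simp_all
    · simp only [upFollowers_cons_true]
      rw [getLast_cons hw]
      exact ih hw

theorem getD_upPos_add_one (w : List Bool) {k : ℕ} (hk : k < w.count true) :
    w.getD (upPos w (k + 1) + 1) false = (upFollowers w)[k]'(by simpa using hk) := by
  induction w generalizing k with
  | nil => simp at hk
  | cons b w ih =>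
    rcases b with _ | _
    · simp only [count_cons] at hk
      simp only [upPos_cons_false (Nat.le_add_left 1 k) hk, getD_cons_succ, ih hk,
        upFollowers_cons_false]
    · rcases k with _ | k
      · cases w <;> simp [upPos_cons_true_one]
      · simp only [count_cons_self] at hk
        simp only [upPos_cons_true_add_one (w := w) (i := k + 1) (by omega) (by omega),
          getD_cons_succ, ih (by omega : k < w.count true), upFollowers_cons_true,
          getElem_cons_succ]

theorem upFollowers_eq_map_range (w : List Bool) :
    upFollowers w = (range (w.count true)).map fun k => w.getD (upPos w (k + 1) + 1) false :=
  ext_getElem (by simp) fun k h _ => by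
    rw [getElem_map, getElem_range, getD_upPos_add_one w (by simpa using h)]

theorem typeWord_eq_dropLast (w : List Bool) : typeWord w = (upFollowers w).dropLast := by
  rw [upFollowers_eq_map_range, dropLast_eq_take, ← map_take, take_range, length_map,
    length_range, Nat.min_eq_left (Nat.sub_le _ _), typeWord]

theorem upFollowers_eq_typeWord_append {w : List Bool} (h : w.count true ≠ 0) :
    upFollowers w = typeWord w ++ [false] := by
  have hne : upFollowers w ≠ [] := by simpa [← length_pos_iff] using Nat.pos_of_ne_zero h
  rw [typeWord_eq_dropLast, ← getLast_upFollowers w hne, dropLast_append_getLast]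

theorem upFollowers_append {X : List Bool} (hX : X.getLast? ≠ some true) (Y : List Bool) :
    upFollowers (X ++ Y) = upFollowers X ++ upFollowers Y := by
  induction X with
  | nil => rfl
  | cons b X ih =>
    rcases X with _ | ⟨c, X⟩
    · cases b
      · rfl
      · simp at hX
    · have ih' := ih (by simpa [getLast?_cons_cons] using hX)
      rw [cons_append] at ih' ⊢
      cases b <;> simp [ih']

theorem IsDyck.upFollowers_nest {A : List Bool} (hA : IsDyck A) (B : List Bool) :
    upFollowers (true :: (A ++ false :: B)) =
      A.headD false :: (upFollowers A ++ upFollowers B) := by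
  rw [upFollowers_cons_true, upFollowers_append hA.getLast?_ne_some_true, upFollowers_cons_false]
  cases A <;> rfl

theorem typeWord_eq_of_upFollowers_eq {P Q : List Bool} (h : upFollowers P = upFollowers Q) :
    typeWord P = typeWord Q := by
  rw [typeWord_eq_dropLast, typeWord_eq_dropLast, h]

namespace Sync

variable {P Q : List Bool}

theorem upFollowers_eq (h : Sync P Q) : upFollowers P = upFollowers Q := by
  obtain ⟨hP, hQ, hlen, -, htype⟩ := h
  have hcount : P.count true = Q.count true := by
    have := hP.two_mul_count_true
    have := hQ.two_mul_count_true
    omega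
  rcases eq_or_ne (P.count true) 0 with h0 | h0
  · rw [(length_eq_zero_iff (l := upFollowers P)).mp (by simp [h0]),
      (length_eq_zero_iff (l := upFollowers Q)).mp (by simp [← hcount, h0])]
  · rw [upFollowers_eq_typeWord_append h0, upFollowers_eq_typeWord_append (hcount ▸ h0), htype]

theorem nest_append {L R Q₁ P₂ Q₂ : List Bool} (hL : IsDyck L) (hR : IsDyck R)
    (hLR : L = [] → R = []) (h₁ : Sync (L ++ R) Q₁) (h₂ : Sync P₂ Q₂) :
    Sync (true :: (L ++ false :: (R ++ P₂))) (true :: (Q₁ ++ false :: Q₂)) := by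
  have hU₁ := h₁.upFollowers_eq
  have hU₂ := h₂.upFollowers_eq
  obtain ⟨-, hQ₁, hlen₁, hle₁, -⟩ := h₁
  obtain ⟨hP₂, hQ₂, hlen₂, hle₂, -⟩ := h₂
  rw [length_append] at hlen₁
  have hrot : TamariLe (true :: (L ++ false :: (R ++ P₂))) (true :: (L ++ R ++ false :: P₂)) := by
    rcases eq_or_ne R [] with rfl | hRne
    · simp only [append_nil, nil_append]
      exact .refl
    · exact .single ⟨true :: L, R, P₂, hR, hRne, by simp, by simp⟩
  have hhead : L.headD false = Q₁.headD false := by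
    rcases eq_or_ne L [] with rfl | hLne
    · obtain rfl := hLR rfl
      obtain rfl := length_eq_zero_iff.mp hlen₁.symm
      rfl
    · have := length_pos_of_ne_nil hLne
      rw [hL.headD_eq_true hLne, hQ₁.headD_eq_true (ne_nil_of_length_pos (by omega))]
  refine ⟨hL.nest (hR.append hP₂), hQ₁.nest hQ₂, by simp; omega, ?_, ?_⟩
  · have hmid : TamariLe (true :: (L ++ R ++ false :: P₂)) (true :: (Q₁ ++ false :: P₂)) := by
      simpa using (hle₁.append_right (false :: P₂)).append_left [true]
    have hlast : TamariLe (true :: (Q₁ ++ false :: P₂)) (true :: (Q₁ ++ false :: Q₂)) := by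
      simpa using hle₂.append_left (true :: Q₁ ++ [false])
    exact hrot.trans (hmid.trans hlast)
  · refine typeWord_eq_of_upFollowers_eq ?_
    rw [hL.upFollowers_nest, hQ₁.upFollowers_nest, hhead,
      upFollowers_append hR.getLast?_ne_some_true, ← append_assoc, ← upFollowers_append hL.getLast?_ne_some_true, hU₁, hU₂]

theorem split_nest {A B C D : List Bool} (hA : IsDyck A) (hC : IsDyck C)
    (h : Sync (true :: (A ++ false :: B)) (true :: (C ++ false :: D))) :
    IsDyck (B.take (C.length - A.length)) ∧ (A = [] → B.take (C.length - A.length) = []) ∧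
      Sync (A ++ B.take (C.length - A.length)) C ∧ Sync (B.drop (C.length - A.length)) D := by
  have hU := h.upFollowers_eq
  obtain ⟨hP, hQ, hlen, hle, -⟩ := h
  obtain ⟨hAC, hB₁⟩ := hle.length_le_and_isDyck_take_of_nest hA hC hP
  obtain ⟨hle₁, hle₂⟩ := hle.split_nest hA hC hP
  have hB₂ := (hA.of_nest hP).drop_of_take hB₁
  simp only [length_cons, length_append] at hlen
  have hlen₁ : (A ++ B.take (C.length - A.length)).length = C.length := by
    simp only [length_append, length_take]
    omega
  have hlen₂ : (B.drop (C.length - A.length)).length = D.length := by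
    simp only [length_drop]
    omega
  rw [hA.upFollowers_nest, hC.upFollowers_nest, ← take_append_drop (C.length - A.length) B,
    upFollowers_append hB₁.getLast?_ne_some_true, ← append_assoc,
    ← upFollowers_append hA.getLast?_ne_some_true] at hU
  obtain ⟨hhead, hU⟩ := cons.inj hU
  obtain ⟨hU₁, hU₂⟩ := append_inj hU (by
    simp only [length_upFollowers]
    have := (hA.append hB₁).two_mul_count_true
    have := hC.two_mul_count_true
    omega)
  refine ⟨hB₁, fun hA₀ => ?_, ⟨hA.append hB₁, hC, hlen₁, hle₁, typeWord_eq_of_upFollowers_eq hU₁⟩,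
    ⟨hB₂, hC.of_nest hQ, hlen₂, hle₂, typeWord_eq_of_upFollowers_eq hU₂⟩⟩
  obtain rfl : C = [] := by
    by_contra hC₀
    rw [hA₀, hC.headD_eq_true hC₀] at hhead
    exact Bool.false_ne_true hhead
  simp [hA₀]

end Sync

/-- The composition map is a bijection from pairs (properly pointed synchronized interval,
synchronized interval) onto nonempty synchronized intervals. -/
theorem sync_compose_bijective :
    (∀ x, PPSI x → Sync (glueP x) (glueQ x) ∧ glueP x ≠ []) ∧
      (∀ P Q : List Bool, Sync P Q → P ≠ [] →
        ∃! x, PPSI x ∧ glueP x = P ∧ glueQ x = Q) := by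
  refine ⟨fun ⟨⟨L, R, Q₁⟩, P₂, Q₂⟩ ⟨hL, hR, hLR, h₁, h₂⟩ =>
    ⟨h₁.nest_append hL hR hLR h₂, cons_ne_nil _ _⟩, fun P Q h hP => ?_⟩
  have hQ : Q ≠ [] := ne_nil_of_length_pos (h.2.2.1 ▸ length_pos_of_ne_nil hP)
  obtain ⟨A, B, hA, -, rfl⟩ := h.1.exists_nest hP
  obtain ⟨C, D, hC, -, rfl⟩ := h.2.1.exists_nest hQ
  obtain ⟨hB₁, hpointed, h₁, h₂⟩ := h.split_nest hA hC
  refine ⟨((A, B.take (C.length - A.length), C), (B.drop (C.length - A.length), D)),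
    ⟨⟨hA, hB₁, hpointed, h₁, h₂⟩, by simp [glueP], rfl⟩, ?_⟩
  rintro ⟨⟨A', B₁, C'⟩, B₂, D'⟩ ⟨⟨hA', -, -, ⟨-, hC', hlen, -, -⟩, -⟩, hglueP, hglueQ⟩
  obtain ⟨rfl, rfl⟩ := hA'.nest_inj hA hglueP
  obtain ⟨rfl, rfl⟩ := hC'.nest_inj hC hglueQ
  replace hlen : B₁.length = C'.length - A'.length := by
    simp only [length_append] at hlen
    omega
  simp [← hlen]
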